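/- Let G = H' ∪ H'' be a global amoeba with H', H'' vertex-disjoint subgraphs covering all edges of G, and let H be a vertex-disjoint copy of H'. Then for any non-edge e of H, the graph G ∪ (H + e) is a global amoeba, and for any edge e of H, the graph G ∪ (H − e) is a global amoeba. -/

import Mathlib

open SimpleGraph Equiv

/-- The labeled copy `G_σ`, with edges `v_{σ⁻¹ i} v_{σ⁻¹ j}` for edges `v_i v_j` of `G`. -/
def copyG {V : Type*} (G : SimpleGraph V) (σ : Equiv.Perm V) : SimpleGraph V where
  Adj a b := G.Adj (σ a) (σ b)
  symm := ⟨fun _ _ h => G.adj_symm h⟩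
  loopless := ⟨fun _ h => G.irrefl h⟩

/-- The graph `G - v_r v_s + v_k v_l`. -/
def replaceG {V : Type*} (G : SimpleGraph V) (r s k l : V) : SimpleGraph V :=
  SimpleGraph.fromEdgeSet ((G.edgeSet \ {s(r, s)}) ∪ {s(k, l)})

/-- The edge-replacement `rs → kl` is feasible: `v_r v_s ∈ E(G)`, `v_k v_l` is a non-edge or
`{k,l} = {r,s}`, and `G - v_r v_s + v_k v_l ≅ G`. -/
def IsFeasible {V : Type*} (G : SimpleGraph V) (r s k l : V) : Prop :=
  G.Adj r s ∧ (Gᶜ.Adj k l ∨ s(k, l) = s(r, s)) ∧ Nonempty (replaceG G r s k l ≃g G)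

/-- The permutations realizing feasible edge-replacements of `G`. -/
def feasiblePerms {V : Type*} (G : SimpleGraph V) : Set (Equiv.Perm V) :=
  {σ | ∃ r s k l, IsFeasible G r s k l ∧ copyG G σ = replaceG G r s k l}

/-- The group `S_G` generated by all permutations realizing feasible edge-replacements. -/
def ampGroup {V : Type*} (G : SimpleGraph V) : Subgroup (Equiv.Perm V) :=
  Subgroup.closure (feasiblePerms G)

/-- `G` is a local amoeba if `S_G` is the full symmetric group. -/
def LocalAmoeba {V : Type*} (G : SimpleGraph V) : Prop := ampGroup G = ⊤

/-- Disjoint union of two graphs. -/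
def sumGraph {V W : Type*} (H : SimpleGraph V) (H' : SimpleGraph W) : SimpleGraph (V ⊕ W) :=
  SimpleGraph.map (⟨Sum.inl, Sum.inl_injective⟩ : V ↪ V ⊕ W) H ⊔ SimpleGraph.map (⟨Sum.inr, Sum.inr_injective⟩ : W ↪ V ⊕ W) H'

/-- `G` together with `t` additional isolated vertices. -/
def addIsolated {V : Type*} (G : SimpleGraph V) (t : ℕ) : SimpleGraph (V ⊕ Fin t) :=
  sumGraph G (⊥ : SimpleGraph (Fin t))

/-- `G` is a global amoeba if `G ∪ tK₁` is a local amoeba for all sufficiently large `t`. -/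
def GlobalAmoeba {V : Type*} (G : SimpleGraph V) : Prop :=
  ∃ T : ℕ, ∀ t ≥ T, LocalAmoeba (addIsolated G t)

/-!
Let `K` be `H'` with one edge `xy` added or removed and `F = (H' ∪ H'' ∪ K) ∪ tK₁` with `t ≥ 1`.
Every feasible replacement of `G ∪ tK₁` stays feasible in `F`, with `K` fixed, so `S_F` contains
every permutation fixing the copy of `K`. Moving `xy` between the copies of `H'` and `K` is a
feasible replacement of `F`, realized by the involution `τ` exchanging the two copies; conjugating
by `τ`, `S_F` also contains every permutation fixing the copy of `H'`. The two families share an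
isolated vertex, so `S_F` contains every transposition.

This gives only the finitary permutations, and `V` may be infinite. But a permutation realizing a
replacement changes at most two adjacencies, so every element of `S_G` changes only finitely many.
If `G ∪ tK₁` had infinitely many non-isolated vertices, exchanging the endpoints of infinitely many
pairwise far-apart edges would change infinitely many adjacencies; hence its support, and that of
`F`, is finite. Any permutation then agrees on the support of `F` with a product of transpositions,
and the remaining factor is an automorphism, realized by the trivial replacement `e → e`.
-/

section Swaps

variable {α : Type*} [DecidableEq α]

lemma swap_mem_of_cover (S : Subgroup (Perm α)) {P Q : Set α} (hcover : ∀ a, a ∈ P ∨ a ∈ Q)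
    {c : α} (hcP : c ∈ P) (hcQ : c ∈ Q) (hP : ∀ a ∈ P, ∀ b ∈ P, swap a b ∈ S)
    (hQ : ∀ a ∈ Q, ∀ b ∈ Q, swap a b ∈ S) (a b : α) : swap a b ∈ S := by
  have hPQ : ∀ a ∈ P, ∀ b ∈ Q, swap a b ∈ S := by
    intro a ha b hb
    rcases eq_or_ne b a with rfl | hba
    · rw [swap_self]
      exact S.one_mem
    rcases eq_or_ne b c with rfl | hbc
    · exact hP a ha b hcP
    have := swap_apply_apply (swap a c) c b
    rw [swap_apply_right, swap_apply_of_ne_of_ne hba hbc] at this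
    rw [this]
    exact S.mul_mem (S.mul_mem (hP a ha c hcP) (hQ c hcQ b hb)) (S.inv_mem (hP a ha c hcP))
  rcases hcover a with ha | ha <;> rcases hcover b with hb | hb
  · exact hP a ha b hb
  · exact hPQ a ha b hb
  · exact swap_comm a b ▸ hPQ b hb a ha
  · exact hQ a ha b hb

lemma exists_mem_eqOn_of_swap_mem (S : Subgroup (Perm α)) (hS : ∀ a b, swap a b ∈ S)
    (π : Perm α) (s : Finset α) : ∃ g ∈ S, ∀ x ∈ s, g x = π x := by
  induction s using Finset.induction_on with
  | empty => exact ⟨1, S.one_mem, by simp⟩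
  | @insert a s ha ih =>
    obtain ⟨g, hg, hgs⟩ := ih
    refine ⟨g * swap a (g⁻¹ (π a)), S.mul_mem hg (hS _ _), fun x hx => ?_⟩
    rcases Finset.mem_insert.mp hx with rfl | hx
    · simp
    · have hxa : x ≠ a := ne_of_mem_of_not_mem hx ha
      have hxπ : x ≠ g⁻¹ (π a) := by
        rintro rfl
        exact hxa (π.injective (by rw [← hgs _ hx, Perm.coe_inv, apply_symm_apply]))
      rw [Perm.mul_apply, swap_apply_of_ne_of_ne hxa hxπ, hgs x hx]

end Swaps

section Feasible

variable {α β : Type*} {G : SimpleGraph α} {G' : SimpleGraph β} {σ : Perm α} {r s k l : α}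

@[simp] lemma copyG_adj {u v : α} : (copyG G σ).Adj u v ↔ G.Adj (σ u) (σ v) := Iff.rfl

lemma replaceG_adj {u v : α} :
    (replaceG G r s k l).Adj u v ↔
      ((G.Adj u v ∧ s(u, v) ≠ s(r, s)) ∨ s(u, v) = s(k, l)) ∧ u ≠ v := by
  simp only [replaceG, fromEdgeSet_adj, Set.mem_union, Set.mem_sdiff, Set.mem_singleton_iff,
    mem_edgeSet]

lemma replaceG_self (hrs : G.Adj r s) : replaceG G r s r s = G := by
  rw [replaceG, Set.union_singleton, Set.insert_sdiff_singleton,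
    Set.insert_eq_of_mem (show s(r, s) ∈ G.edgeSet from hrs), fromEdgeSet_edgeSet]

lemma mem_feasiblePerms_of_copyG_eq (hrs : G.Adj r s) (hkl : Gᶜ.Adj k l ∨ s(k, l) = s(r, s))
    (hσ : copyG G σ = replaceG G r s k l) : σ ∈ feasiblePerms G :=
  ⟨r, s, k, l, ⟨hrs, hkl, ⟨⟨σ, fun {_ _} => by rw [← hσ]; rfl⟩⟩⟩, hσ⟩

lemma mem_ampGroup_of_copyG_eq_self (hrs : G.Adj r s) (hσ : copyG G σ = G) : σ ∈ ampGroup G :=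
  Subgroup.subset_closure <|
    mem_feasiblePerms_of_copyG_eq hrs (Or.inr rfl) (by rw [replaceG_self hrs, hσ])

lemma copyG_eq_self_of_forall_mem_support (h : ∀ v ∈ G.support, σ v = v) : copyG G σ = G := by
  have hout : ∀ w, w ∉ G.support → σ w ∉ G.support := fun w hw hσw =>
    hw (σ.injective (h _ hσw) ▸ hσw)
  ext u v
  rw [copyG_adj]
  by_cases hu : u ∈ G.support
  · by_cases hv : v ∈ G.support
    · rw [h u hu, h v hv]
    · exact iff_of_false (fun h' => hout v hv (G.mem_support.mpr ⟨_, h'.symm⟩))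
        (fun h' => hv (G.mem_support.mpr ⟨_, h'.symm⟩))
  · exact iff_of_false (fun h' => hout u hu (G.mem_support.mpr ⟨_, h'⟩))
      (fun h' => hu (G.mem_support.mpr ⟨_, h'⟩))

theorem localAmoeba_of_swap_mem [DecidableEq α] (hrs : G.Adj r s) (hsupp : G.support.Finite)
    (hswap : ∀ a b, swap a b ∈ ampGroup G) : LocalAmoeba G := by
  refine (Subgroup.eq_top_iff' _).mpr fun π => ?_
  obtain ⟨g, hg, hgπ⟩ := exists_mem_eqOn_of_swap_mem _ hswap π hsupp.toFinset
  have : g⁻¹ * π ∈ ampGroup G := mem_ampGroup_of_copyG_eq_self hrs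
    (copyG_eq_self_of_forall_mem_support fun v hv => by
      rw [Perm.mul_apply, ← hgπ v (hsupp.mem_toFinset.mpr hv), Perm.coe_inv, symm_apply_apply])
  simpa using (ampGroup G).mul_mem hg this

lemma mem_ampGroup_of_map (f : Perm α →* Perm β)
    (hf : ∀ σ ∈ feasiblePerms G, f σ ∈ feasiblePerms G') (hσ : σ ∈ ampGroup G) :
    f σ ∈ ampGroup G' := by
  have : (ampGroup G).map f ≤ ampGroup G' := by
    rw [ampGroup, MonoidHom.map_closure]
    exact Subgroup.closure_mono (Set.image_subset_iff.mpr hf)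
  exact this ⟨σ, hσ, rfl⟩

lemma permCongr_mem_feasiblePerms (e : G ≃g G') (hσ : σ ∈ feasiblePerms G) :
    e.toEquiv.permCongr σ ∈ feasiblePerms G' := by
  obtain ⟨r, s, k, l, ⟨hrs, hkl, -⟩, hcopy⟩ := hσ
  refine mem_feasiblePerms_of_copyG_eq (r := e r) (s := e s) (k := e k) (l := e l)
    (e.map_adj_iff.mpr hrs) ?_ ?_
  · rcases hkl with hkl | hkl
    · exact Or.inl (by simpa [compl_adj, Iso.map_adj_iff] using hkl)
    · exact Or.inr (by simpa [Sym2.eq_iff] using hkl)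
  · ext u v
    obtain ⟨u, rfl⟩ := e.toEquiv.surjective u
    obtain ⟨v, rfl⟩ := e.toEquiv.surjective v
    have := congrArg (fun H => H.Adj u v) hcopy
    simp only [copyG_adj, replaceG_adj, eq_iff_iff] at this
    simp only [copyG_adj, replaceG_adj, Equiv.permCongr_apply, Equiv.symm_apply_apply]
    simp [Iso.map_adj_iff, this]

lemma LocalAmoeba.of_iso (e : G ≃g G') (hG : LocalAmoeba G) : LocalAmoeba G' := by
  refine (Subgroup.eq_top_iff' _).mpr fun π => ?_
  have := mem_ampGroup_of_map e.toEquiv.permCongrHom.toMonoidHom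
    (fun σ hσ => permCongr_mem_feasiblePerms e hσ)
    (hG ▸ Subgroup.mem_top (e.toEquiv.permCongr.symm π))
  rwa [MulEquiv.coe_toMonoidHom, Equiv.permCongrHom_coe, Equiv.apply_symm_apply] at this

lemma sumCongr_mem_feasiblePerms {A : SimpleGraph α} (B : SimpleGraph β)
    (hσ : σ ∈ feasiblePerms A) : Perm.sumCongr σ 1 ∈ feasiblePerms (A ⊕g B) := by
  obtain ⟨r, s, k, l, ⟨hrs, hkl, -⟩, hcopy⟩ := hσ
  refine mem_feasiblePerms_of_copyG_eq (r := .inl r) (s := .inl s) (k := .inl k) (l := .inl l)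
    (by simpa) (by simpa [compl_adj] using hkl) ?_
  ext (a | a) (b | b)
  · simpa [replaceG_adj] using congrArg (fun H => H.Adj a b) hcopy
  · simp [replaceG_adj]
  · simp [replaceG_adj]
  · simpa [replaceG_adj] using fun h : B.Adj a b => h.ne

lemma sumCongr_mem_ampGroup {A : SimpleGraph α} (B : SimpleGraph β) (hσ : σ ∈ ampGroup A) :
    Perm.sumCongr σ 1 ∈ ampGroup (A ⊕g B) :=
  mem_ampGroup_of_map ((Perm.sumCongrHom α β).comp (MonoidHom.inl _ _))
    (fun _ hσ => sumCongr_mem_feasiblePerms B hσ) hσ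

lemma sumComm_mem_feasiblePerms_sum_deleteEdges {A : SimpleGraph α} {x y : α}
    (hxy : A.Adj x y) : Equiv.sumComm α α ∈ feasiblePerms (A ⊕g A.deleteEdges {s(x, y)}) := by
  refine mem_feasiblePerms_of_copyG_eq (r := .inl x) (s := .inl y) (k := .inr x) (l := .inr y)
    (by simpa) (Or.inl (by simp [compl_adj, hxy.ne])) ?_
  ext (a | a) (b | b) <;> simp [replaceG_adj]
  · exact fun h _ _ => h.ne
  · grind [Adj.ne, Adj.symm]

lemma sumComm_mem_feasiblePerms_deleteEdges_sum {A : SimpleGraph α} {x y : α}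
    (hxy : A.Adj x y) : Equiv.sumComm α α ∈ feasiblePerms (A.deleteEdges {s(x, y)} ⊕g A) := by
  convert permCongr_mem_feasiblePerms Iso.sumComm (sumComm_mem_feasiblePerms_sum_deleteEdges hxy)
  ext (a | a) <;> rfl

end Feasible

section AlmostAut

variable {α : Type*} {G : SimpleGraph α} {σ : Perm α}

def defectSet (G : SimpleGraph α) (π : Perm α) : Set (α × α) :=
  {p | ¬(G.Adj (π p.1) (π p.2) ↔ G.Adj p.1 p.2)}

lemma mem_defectSet {π : Perm α} {p : α × α} :
    p ∈ defectSet G π ↔ ¬(G.Adj (π p.1) (π p.2) ↔ G.Adj p.1 p.2) := Iff.rfl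

lemma defectSet_mul_subset (a b : Perm α) :
    defectSet G (a * b) ⊆ Prod.map b b ⁻¹' defectSet G a ∪ defectSet G b := by
  intro p hp
  by_contra h
  simp only [Set.mem_union, Set.mem_preimage, mem_defectSet, Prod.map_fst, Prod.map_snd,
    Perm.mul_apply, not_or, not_not] at h hp
  exact hp (h.1.trans h.2)

lemma defectSet_inv (a : Perm α) : defectSet G a⁻¹ = Prod.map ⇑a⁻¹ ⇑a⁻¹ ⁻¹' defectSet G a := by
  ext p
  simp [defectSet, iff_comm]

def almostAut (G : SimpleGraph α) : Subgroup (Perm α) where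
  carrier := {π | (defectSet G π).Finite}
  one_mem' := by simp [defectSet]
  mul_mem' {a b} ha hb :=
    ((ha.preimage (b.injective.prodMap b.injective).injOn).union hb).subset
      (defectSet_mul_subset a b)
  inv_mem' {a} ha := by
    change (defectSet G a⁻¹).Finite
    rw [defectSet_inv]
    exact ha.preimage (a⁻¹.injective.prodMap a⁻¹.injective).injOn

lemma defectSet_subset_of_copyG_eq {r s k l : α} (h : copyG G σ = replaceG G r s k l) :
    defectSet G σ ⊆ {(r, s), (s, r), (k, l), (l, k)} := by
  rintro ⟨u, v⟩ huv
  have := congrArg (fun H => H.Adj u v) h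
  simp only [copyG_adj, replaceG_adj, eq_iff_iff] at this
  simp only [mem_defectSet, this] at huv
  by_contra hne
  simp only [Set.mem_insert_iff, Set.mem_singleton_iff, Prod.mk.injEq] at hne
  grind [Adj.ne]

lemma ampGroup_le_almostAut : ampGroup G ≤ almostAut G :=
  (Subgroup.closure_le _).mpr fun _ ⟨_, _, _, _, _, h⟩ =>
    (Set.toFinite _).subset (defectSet_subset_of_copyG_eq h)

lemma neighborSet_finite_of_almostAut_eq_top (hG : almostAut G = ⊤) {v₀ : α}
    (hv₀ : ∀ u, ¬ G.Adj v₀ u) (v : α) : (G.neighborSet v).Finite := by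
  classical
  have hfin : (defectSet G (swap v v₀)).Finite := (hG ▸ Subgroup.mem_top (swap v v₀) :)
  refine ((hfin.preimage (fun _ _ _ _ h => congrArg Prod.fst h : Set.InjOn (·, v) _)).union
    (Set.finite_singleton v₀)).subset fun u hu => ?_
  by_cases hu₀ : u = v₀
  · exact Or.inr hu₀
  · refine Or.inl fun h => hv₀ u (G.adj_symm ?_)
    simpa [swap_apply_of_ne_of_ne hu.ne' hu₀] using h.mpr hu.symm

lemma exists_far_edges (hdeg : ∀ v, (G.neighborSet v).Finite) (hsupp : G.support.Infinite) :
    ∃ x y : ℕ → α, (∀ n, G.Adj (x n) (y n)) ∧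
      ∀ m n, m ≠ n → y m ≠ y n ∧ x m ≠ y n ∧ ¬ G.Adj (x m) (y n) := by
  let ball (v : α) : Set α := insert v (G.neighborSet v)
  have hball (v : α) : (ball v).Finite := (hdeg v).insert v
  have hstep : ∀ s : Finset (α × α), (∀ p ∈ s, G.Adj p.1 p.2) → ∃ q : α × α, G.Adj q.1 q.2 ∧
      ∀ p ∈ s, q.1 ∉ ball p.1 ∪ ball p.2 ∧ q.2 ∉ ball p.1 ∪ ball p.2 := by
    intro s _
    set B := ⋃ p ∈ s, ball p.1 ∪ ball p.2
    have hB : B.Finite := s.finite_toSet.biUnion fun p _ => (hball p.1).union (hball p.2)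
    -- a vertex outside `B` with no neighbour in `B`, together with any of its neighbours
    obtain ⟨v, ⟨u, hvu⟩, hv⟩ :=
      (hsupp.sdiff (hB.union (hB.biUnion fun b _ => hdeg b))).nonempty
    have hvu : G.Adj v u := hvu
    simp only [Set.mem_union, Set.mem_iUnion, not_or] at hv
    exact ⟨(v, u), hvu, fun p hp => ⟨fun h => hv.1 (Set.mem_biUnion hp h),
      fun h => hv.2 ⟨u, Set.mem_biUnion hp h, hvu.symm⟩⟩⟩
  obtain ⟨f, hadj, hfar⟩ := exists_seq_of_forall_finset_exists _ _ hstep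
  refine ⟨fun n => (f n).1, fun n => (f n).2, hadj, fun m n hmn => ?_⟩
  rcases hmn.lt_or_gt with h | h
  · have := (hfar m n h).2
    simp only [ball, Set.mem_union, Set.mem_insert_iff, mem_neighborSet, not_or] at this
    exact ⟨Ne.symm this.2.1, Ne.symm this.1.1, this.1.2⟩
  · have := hfar n m h
    simp only [ball, Set.mem_union, Set.mem_insert_iff, mem_neighborSet, not_or] at this
    exact ⟨this.2.2.1, this.1.2.1, fun h' => this.1.2.2 h'.symm⟩

lemma almostAut_ne_top_of_far_edges (x y : ℕ → α) (hxy : ∀ n, G.Adj (x n) (y n))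
    (hfar : ∀ m n, m ≠ n → y m ≠ y n ∧ x m ≠ y n ∧ ¬ G.Adj (x m) (y n)) :
    almostAut G ≠ ⊤ := by
  classical
  have hy : Function.Injective y := fun m n h => by_contra fun hmn => (hfar m n hmn).1 h
  have hx (m n : ℕ) : x m ≠ y n := by
    rcases eq_or_ne m n with rfl | hmn
    exacts [(hxy m).ne, (hfar m n hmn).2.1]
  -- a fixed-point-free permutation of `ℕ`, transported onto the `y n`
  let e : Perm ℕ := Equiv.intEquivNat.permCongr (Equiv.addRight 1)
  have he (n : ℕ) : e n ≠ n := by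
    simp [e, ← Equiv.eq_symm_apply]
  let π : Perm α := e.extendDomain (Equiv.ofInjective y hy)
  have hπy (n : ℕ) : π (y n) = y (e n) := by
    simpa using Perm.extendDomain_apply_image e (Equiv.ofInjective y hy) n
  have hπx (n : ℕ) : π (x n) = x n :=
    Perm.extendDomain_apply_not_subtype _ _ fun ⟨m, hm⟩ => hx n m hm.symm
  intro htop
  refine Set.infinite_of_injective_forall_mem (f := fun n => (x n, y n))
    (fun m n h => hy (Prod.ext_iff.mp h).2) (fun n => ?_) (htop ▸ Subgroup.mem_top π :)
  rw [mem_defectSet, hπx, hπy]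
  exact fun h => (hfar n (e n) (he n).symm).2.2 (h.mpr (hxy n))

theorem support_finite_of_localAmoeba (hG : LocalAmoeba G) {v₀ : α} (hv₀ : ∀ u, ¬ G.Adj v₀ u) :
    G.support.Finite := by
  have htop : almostAut G = ⊤ := top_le_iff.mp (hG ▸ ampGroup_le_almostAut)
  by_contra hinf
  obtain ⟨x, y, hxy, hfar⟩ :=
    exists_far_edges (neighborSet_finite_of_almostAut_eq_top htop hv₀) hinf
  exact almostAut_ne_top_of_far_edges x y hxy hfar htop

end AlmostAut

section Sum

variable {α β γ : Type*}

lemma sumGraph_eq_sum (A : SimpleGraph α) (B : SimpleGraph β) : sumGraph A B = A ⊕g B := by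
  ext (a | a) (b | b) <;> simp only [sumGraph, sup_adj, map_adj] <;> simp

lemma addIsolated_eq_sum (G : SimpleGraph α) (t : ℕ) :
    addIsolated G t = G ⊕g (⊥ : SimpleGraph (Fin t)) :=
  sumGraph_eq_sum _ _

lemma support_sum (A : SimpleGraph α) (B : SimpleGraph β) :
    (A ⊕g B).support = Sum.inl '' A.support ∪ Sum.inr '' B.support := by
  ext (a | a) <;> simp [mem_support]

lemma support_sum_finite_iff {A : SimpleGraph α} {B : SimpleGraph β} :
    (A ⊕g B).support.Finite ↔ A.support.Finite ∧ B.support.Finite := by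
  rw [support_sum, Set.finite_union, Set.finite_image_iff Sum.inl_injective.injOn,
    Set.finite_image_iff Sum.inr_injective.injOn]

def SimpleGraph.Iso.sumRightComm {A : SimpleGraph α} {B : SimpleGraph β} {C : SimpleGraph γ} :
    (A ⊕g B) ⊕g C ≃g (A ⊕g C) ⊕g B :=
  Iso.sumAssoc.trans ((Iso.sumCongr .refl Iso.sumComm).trans Iso.sumAssoc.symm)

end Sum

section OneEdge

variable {V : Type*} {H : SimpleGraph V} {a b : V}

lemma deleteEdges_fromEdgeSet_union (hab : ¬ H.Adj a b) :
    (fromEdgeSet (H.edgeSet ∪ {s(a, b)})).deleteEdges {s(a, b)} = H := by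
  ext u v
  simp only [deleteEdges_adj, fromEdgeSet_adj, Set.mem_union, mem_edgeSet, Set.mem_singleton_iff]
  grind [Adj.ne, Adj.symm]

lemma support_fromEdgeSet_union_sdiff_subset :
    (fromEdgeSet (H.edgeSet ∪ {s(a, b)})).support \ H.support ⊆ {a, b} := by
  rintro u ⟨⟨v, huv⟩, hu⟩
  have huv : (fromEdgeSet (H.edgeSet ∪ {s(a, b)})).Adj u v := huv
  simp only [fromEdgeSet_adj, Set.mem_union, mem_edgeSet, Set.mem_singleton_iff,
    Sym2.eq_iff] at huv
  rcases huv.1 with h | ⟨rfl, -⟩ | ⟨rfl, -⟩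
  · exact absurd (H.mem_support.mpr ⟨v, h⟩) hu
  · exact Or.inl rfl
  · exact Or.inr rfl

end OneEdge

theorem localAmoeba_sum_sum_of_sumComm_mem {V γ : Type*} {H K : SimpleGraph V}
    {C : SimpleGraph γ} {c : γ} (hc : ∀ u, ¬ C.Adj c u)
    (hHK : Equiv.sumComm V V ∈ feasiblePerms (H ⊕g K)) (hK : (K.support \ H.support).Finite)
    (hL : LocalAmoeba (H ⊕g C)) : LocalAmoeba ((H ⊕g C) ⊕g K) := by
  classical
  have hleft (π : Perm (V ⊕ γ)) : Perm.sumCongr π 1 ∈ ampGroup ((H ⊕g C) ⊕g K) :=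
    sumCongr_mem_ampGroup K (hL ▸ Subgroup.mem_top π)
  let e : (H ⊕g K) ⊕g C ≃g (H ⊕g C) ⊕g K := Iso.sumRightComm
  -- `τ` exchanges the copies of `H` and `K` and fixes `C`
  let τ := e.toEquiv.permCongr (Perm.sumCongr (Equiv.sumComm V V) (1 : Perm γ))
  have hτ : τ ∈ feasiblePerms ((H ⊕g C) ⊕g K) :=
    permCongr_mem_feasiblePerms e (sumCongr_mem_feasiblePerms C hHK)
  have hP : ∀ a ∈ Set.range Sum.inl, ∀ b ∈ Set.range Sum.inl,
      swap a b ∈ ampGroup ((H ⊕g C) ⊕g K) := by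
    rintro _ ⟨a, rfl⟩ _ ⟨b, rfl⟩
    simpa using hleft (swap a b)
  have hQ : ∀ a ∈ τ '' Set.range Sum.inl, ∀ b ∈ τ '' Set.range Sum.inl,
      swap a b ∈ ampGroup ((H ⊕g C) ⊕g K) := by
    rintro _ ⟨a, ha, rfl⟩ _ ⟨b, hb, rfl⟩
    have hτ' := Subgroup.subset_closure hτ
    rw [swap_apply_apply]
    exact mul_mem (mul_mem hτ' (hP a ha b hb)) (inv_mem hτ')
  have hcover (u : (V ⊕ γ) ⊕ V) : u ∈ Set.range Sum.inl ∨ u ∈ τ '' Set.range Sum.inl := by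
    rcases u with u | v
    · exact Or.inl ⟨u, rfl⟩
    · exact Or.inr ⟨.inl (.inl v), ⟨_, rfl⟩, rfl⟩
  have hsupp : ((H ⊕g C) ⊕g K).support.Finite := by
    have hHC := support_finite_of_localAmoeba hL (v₀ := .inr c) (by rintro (_ | _) <;> simp [hc])
    exact support_sum_finite_iff.mpr ⟨hHC, hK.of_sdiff (support_sum_finite_iff.mp hHC).1⟩
  obtain ⟨r, s, -, -, ⟨hrs, -⟩, -⟩ := hτ
  exact localAmoeba_of_swap_mem hrs hsupp (swap_mem_of_cover _ hcover ⟨.inr c, rfl⟩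
    ⟨.inl (.inr c), ⟨_, rfl⟩, rfl⟩ hP hQ)

theorem globalAmoeba_sumGraph_of_sumComm_mem {V W : Type*} {H' K : SimpleGraph V}
    {H'' : SimpleGraph W} (hHK : Equiv.sumComm V V ∈ feasiblePerms (H' ⊕g K))
    (hK : (K.support \ H'.support).Finite) (hG : GlobalAmoeba (sumGraph H' H'')) :
    GlobalAmoeba (sumGraph (sumGraph H' H'') K) := by
  obtain ⟨T, hT⟩ := hG
  refine ⟨max T 1, fun t ht => ?_⟩
  have hL := hT t (le_of_max_le_left ht)
  rw [addIsolated_eq_sum, sumGraph_eq_sum] at hL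
  rw [addIsolated_eq_sum, sumGraph_eq_sum, sumGraph_eq_sum]
  have := localAmoeba_sum_sum_of_sumComm_mem (C := H'' ⊕g ⊥) (c := .inr ⟨0, by omega⟩)
    (by rintro (_ | _) <;> simp) hHK hK (hL.of_iso Iso.sumAssoc)
  exact this.of_iso ((Iso.sumCongr Iso.sumAssoc.symm .refl).trans Iso.sumRightComm)

theorem stmt16 {V W : Type*} (H' : SimpleGraph V) (H'' : SimpleGraph W)
    (hG : GlobalAmoeba (sumGraph H' H'')) :
    (∀ a b : V, a ≠ b → ¬ H'.Adj a b →
      GlobalAmoeba (sumGraph (sumGraph H' H'')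
        (SimpleGraph.fromEdgeSet (H'.edgeSet ∪ {s(a, b)})))) ∧
    (∀ a b : V, H'.Adj a b →
      GlobalAmoeba (sumGraph (sumGraph H' H'') (H'.deleteEdges {s(a, b)}))) := by
  refine ⟨fun a b hab hnadj => ?_, fun a b hadj => ?_⟩
  · have hadd : (fromEdgeSet (H'.edgeSet ∪ {s(a, b)})).Adj a b := by simp [hab]
    have hHK := sumComm_mem_feasiblePerms_deleteEdges_sum hadd
    rw [deleteEdges_fromEdgeSet_union hnadj] at hHK
    exact globalAmoeba_sumGraph_of_sumComm_mem hHK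
      ((Set.toFinite {a, b}).subset support_fromEdgeSet_union_sdiff_subset) hG
  · exact globalAmoeba_sumGraph_of_sumComm_mem (sumComm_mem_feasiblePerms_sum_deleteEdges hadj)
      (by simp [Set.sdiff_eq_empty.mpr (support_mono (deleteEdges_le _))]) hG
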